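/- For any nonzero vector x in ℂ^n with n ≥ 2, there exists a finite product A of complex Givens-type rotation matrices H(i,j,θ,φ,ψ,δ) such that A x = ‖x‖ • e₁, where e₁ is the first standard basis vector. -/

import Mathlib

open Complex Matrix

noncomputable def Hmat (n : ℕ) (i j : Fin n) (θ φ ψ δ : ℝ) :
    Matrix (Fin n) (Fin n) ℂ := fun k l =>
  if k = i ∧ l = i then Complex.exp (Complex.I * φ / 2) * Complex.exp (Complex.I * ψ) * Real.cos θ
  else if k = i ∧ l = j then Complex.exp (Complex.I * φ / 2) * Complex.exp (Complex.I * δ) * Real.sin θ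
  else if k = j ∧ l = i then -(Complex.exp (Complex.I * φ / 2) * Complex.exp (-(Complex.I * δ)) * Real.sin θ)
  else if k = j ∧ l = j then Complex.exp (Complex.I * φ / 2) * Complex.exp (-(Complex.I * ψ)) * Real.cos θ
  else if k = l then 1 else 0

/-! A Givens rotation in the plane of coordinates `0` and `m`, with its angles read off the polar
forms of the two entries, sends `(v 0, v m)` to `(√(‖v 0‖² + ‖v m‖²), 0)` and fixes every other
entry. Doing this for `m = 1, …, n - 1` in turn moves the whole norm of `x` into its first
entry. -/

lemma Real.exists_sqrt_sq_add_sq_mul_cos_sin (p q : ℝ) :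
    ∃ θ : ℝ, √(p ^ 2 + q ^ 2) * Real.cos θ = p ∧ √(p ^ 2 + q ^ 2) * Real.sin θ = q := by
  refine ⟨arg (p + q * I), ?_, ?_⟩
  · simpa [norm_add_mul_I] using norm_mul_cos_arg (p + q * I)
  · simpa [norm_add_mul_I] using norm_mul_sin_arg (p + q * I)

lemma exp_neg_arg_mul_I_mul_self (a : ℂ) : exp (I * (-arg a : ℝ)) * a = ‖a‖ := by
  rw [show I * ((-arg a : ℝ) : ℂ) = -(arg a * I) by push_cast; ring, exp_neg,
    inv_mul_eq_iff_eq_mul₀ (exp_ne_zero _), mul_comm, norm_mul_exp_arg_mul_I]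

lemma exists_givens_angles (a b : ℂ) : ∃ θ ψ δ : ℝ,
    exp (I * ψ) * Real.cos θ * a + exp (I * δ) * Real.sin θ * b = √(‖a‖ ^ 2 + ‖b‖ ^ 2) ∧
      -(exp (-(I * δ)) * Real.sin θ) * a + exp (-(I * ψ)) * Real.cos θ * b = 0 := by
  obtain ⟨θ, hc, hs⟩ := Real.exists_sqrt_sq_add_sq_mul_cos_sin ‖a‖ ‖b‖
  set r := √(‖a‖ ^ 2 + ‖b‖ ^ 2)
  refine ⟨θ, -arg a, -arg b, ?_, ?_⟩
  · have hcs : (Real.cos θ : ℂ) ^ 2 + (Real.sin θ : ℂ) ^ 2 = 1 := by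
      exact_mod_cast Real.cos_sq_add_sin_sq θ
    have hc' : (r : ℂ) * Real.cos θ = ‖a‖ := by exact_mod_cast hc
    have hs' : (r : ℂ) * Real.sin θ = ‖b‖ := by exact_mod_cast hs
    linear_combination Real.cos θ * exp_neg_arg_mul_I_mul_self a
      + Real.sin θ * exp_neg_arg_mul_I_mul_self b - Real.cos θ * hc' - Real.sin θ * hs' + r * hcs
  · have ha := norm_mul_exp_arg_mul_I a
    have hb := norm_mul_exp_arg_mul_I b
    have hc' : (r : ℂ) * Real.cos θ = ‖a‖ := by exact_mod_cast hc
    have hs' : (r : ℂ) * Real.sin θ = ‖b‖ := by exact_mod_cast hs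
    rw [show -(I * ((-arg b : ℝ) : ℂ)) = arg b * I by push_cast; ring,
      show -(I * ((-arg a : ℝ) : ℂ)) = arg a * I by push_cast; ring]
    linear_combination (exp (arg b * I) * Real.sin θ) * ha - (exp (arg a * I) * Real.cos θ) * hb
      + exp (arg a * I) * exp (arg b * I) * (Real.sin θ * hc' - Real.cos θ * hs')

lemma Hmat_mulVec {n : ℕ} {i j : Fin n} (hij : i ≠ j) (θ φ ψ δ : ℝ) (v : Fin n → ℂ) :
    Hmat n i j θ φ ψ δ *ᵥ v =
      Function.update (Function.update v
        i (exp (I * φ / 2) * (exp (I * ψ) * Real.cos θ * v i + exp (I * δ) * Real.sin θ * v j)))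
        j (exp (I * φ / 2) *
          (-(exp (-(I * δ)) * Real.sin θ) * v i + exp (-(I * ψ)) * Real.cos θ * v j)) := by
  funext k
  simp only [mulVec, dotProduct]
  by_cases hki : k = i
  · subst hki
    rw [Fintype.sum_eq_add k j hij fun l hl => by simp [Hmat, hl.1, hl.2, Ne.symm hl.1]]
    simp [Hmat, hij, Ne.symm hij]
    ring
  by_cases hkj : k = j
  · subst hkj
    rw [Fintype.sum_eq_add i k (Ne.symm hki) fun l hl => by
      simp [Hmat, hki, hl.1, hl.2, Ne.symm hl.2]]
    simp [Hmat, hki, Ne.symm hki]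
    ring
  rw [Fintype.sum_eq_single k fun l hl => by simp [Hmat, hki, hkj, Ne.symm hl]]
  simp [Hmat, hki, hkj]

def HmatReachable {n : ℕ} (x w : Fin n → ℂ) : Prop :=
  ∃ L : List (Matrix (Fin n) (Fin n) ℂ),
    (∀ M ∈ L, ∃ (i j : Fin n) (θ φ ψ δ : ℝ), i < j ∧ M = Hmat n i j θ φ ψ δ) ∧ L.prod *ᵥ x = w

namespace HmatReachable

variable {n : ℕ} {x v : Fin n → ℂ}

lemma refl (x : Fin n → ℂ) : HmatReachable x x := ⟨[], by simp, by simp⟩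

lemma Hmat_mulVec (h : HmatReachable x v) {i j : Fin n} (hij : i < j) (θ φ ψ δ : ℝ) :
    HmatReachable x (Hmat n i j θ φ ψ δ *ᵥ v) := by
  obtain ⟨L, hL, rfl⟩ := h
  refine ⟨Hmat n i j θ φ ψ δ :: L, ?_, by rw [List.prod_cons, mulVec_mulVec]⟩
  intro M hM
  rcases List.mem_cons.mp hM with rfl | hM
  · exact ⟨i, j, θ, φ, ψ, δ, hij, rfl⟩
  · exact hL M hM

lemma update_sqrt (h : HmatReachable x v) {i j : Fin n} (hij : i < j) :
    HmatReachable x (Function.update (Function.update v i (√(‖v i‖ ^ 2 + ‖v j‖ ^ 2))) j 0) := by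
  obtain ⟨θ, ψ, δ, hi, hj⟩ := exists_givens_angles (v i) (v j)
  have := h.Hmat_mulVec hij θ 0 ψ δ
  rwa [_root_.Hmat_mulVec hij.ne, ofReal_zero, mul_zero, zero_div, exp_zero, one_mul, one_mul, hi,
    hj] at this

end HmatReachable

noncomputable def partialNormSq {n : ℕ} (x : Fin n → ℂ) (m : ℕ) : ℝ :=
  ∑ k ∈ Finset.univ.filter (fun k : Fin n => (k : ℕ) < m), ‖x k‖ ^ 2

def collapsePrefix {n : ℕ} (x : Fin n → ℂ) (m : ℕ) (y : ℂ) : Fin n → ℂ := fun k =>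
  if (k : ℕ) = 0 then y else if (k : ℕ) < m then 0 else x k

section

variable {n : ℕ} (x : Fin n → ℂ)

lemma partialNormSq_nonneg (m : ℕ) : 0 ≤ partialNormSq x m :=
  Finset.sum_nonneg fun _ _ => by positivity

lemma partialNormSq_zero : partialNormSq x 0 = 0 := by simp [partialNormSq]

lemma partialNormSq_succ {m : ℕ} (hm : m < n) :
    partialNormSq x (m + 1) = partialNormSq x m + ‖x ⟨m, hm⟩‖ ^ 2 := by
  have : Finset.univ.filter (fun k : Fin n => (k : ℕ) < m + 1) =
      insert ⟨m, hm⟩ (Finset.univ.filter fun k : Fin n => (k : ℕ) < m) := by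
    ext k
    simp only [Finset.mem_filter, Finset.mem_univ, true_and, Finset.mem_insert, Fin.ext_iff]
    omega
  rw [partialNormSq, this, Finset.sum_insert (by simp), add_comm]
  rfl

lemma partialNormSq_self : partialNormSq x n = ∑ k, ‖x k‖ ^ 2 := by
  simp [partialNormSq]

lemma collapsePrefix_one (hn : 0 < n) : collapsePrefix x 1 (x ⟨0, hn⟩) = x := by
  funext k
  by_cases hk : (k : ℕ) = 0
  · simp [collapsePrefix, show k = ⟨0, hn⟩ from Fin.ext hk]
  · simp [collapsePrefix, hk]

lemma update_collapsePrefix {m : ℕ} (h0 : 0 < m) (hm : m < n) (y z : ℂ) :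
    Function.update (Function.update (collapsePrefix x m y) ⟨0, h0.trans hm⟩ z) ⟨m, hm⟩ 0 =
      collapsePrefix x (m + 1) z := by
  funext k
  simp only [Function.update_apply, collapsePrefix, Fin.ext_iff]
  split_ifs <;> first | rfl | omega

lemma collapsePrefix_self (hn : 0 < n) (y : ℂ) :
    collapsePrefix x n y = fun k => if k = ⟨0, hn⟩ then y else 0 := by
  funext k
  simp [collapsePrefix, Fin.ext_iff]

end

lemma HmatReachable.collapsePrefix_succ {n : ℕ} {x : Fin n → ℂ} {m : ℕ} (h0 : 0 < m)
    (hm : m < n) {y : ℂ} (h : HmatReachable x (collapsePrefix x m y))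
    (hy : ‖y‖ ^ 2 = partialNormSq x m) :
    HmatReachable x (collapsePrefix x (m + 1) √(partialNormSq x (m + 1))) := by
  have := h.update_sqrt (i := ⟨0, h0.trans hm⟩) (j := ⟨m, hm⟩) h0
  simp only [collapsePrefix, h0.ne', lt_irrefl, if_false, if_true] at this
  rwa [hy, ← partialNormSq_succ, update_collapsePrefix x h0 hm] at this

lemma hmatReachable_collapsePrefix_sqrt {n : ℕ} (x : Fin n → ℂ) {m : ℕ} (h2 : 2 ≤ m) (hm : m ≤ n) :
    HmatReachable x (collapsePrefix x m √(partialNormSq x m)) := by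
  induction m, h2 using Nat.le_induction with
  | base =>
    refine HmatReachable.collapsePrefix_succ (y := x ⟨0, by omega⟩) one_pos hm ?_ ?_
    · rw [collapsePrefix_one x (by omega)]
      exact HmatReachable.refl x
    · rw [partialNormSq_succ x (by omega), partialNormSq_zero, zero_add]
  | succ m h2 ih =>
    refine (ih (by omega)).collapsePrefix_succ (by omega) hm ?_
    rw [norm_real, Real.norm_of_nonneg (Real.sqrt_nonneg _),
      Real.sq_sqrt (partialNormSq_nonneg x m)]

theorem stmt_0 (n : ℕ) (hn : 2 ≤ n) (x : Fin n → ℂ) :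
    ∃ L : List (Matrix (Fin n) (Fin n) ℂ),
      (∀ M ∈ L, ∃ (i j : Fin n) (θ φ ψ δ : ℝ), i < j ∧ M = Hmat n i j θ φ ψ δ) ∧
      L.prod.mulVec x =
        fun k => if k = (⟨0, by omega⟩ : Fin n) then (Real.sqrt (∑ i, ‖x i‖ ^ 2) : ℂ) else 0 := by
  rw [← partialNormSq_self, ← collapsePrefix_self]
  exact hmatReachable_collapsePrefix_sqrt x hn le_rfl
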